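/- Bressoud's second identity: for all n ≥ 0, Σ_{k=0}^n q^{k²+k} [n choose k]_q = Σ_{j∈ℤ} (−1)^j q^{j(5j−3)/2} [2n+1 choose n+1−2j]_q. -/
import Mathlib


open LaurentPolynomial

/-- The Gaussian (q-)binomial coefficient `[n choose k]_q`, as a Laurent polynomial in `q`,
with the convention that it vanishes for `k < 0` or `k > n`.  Defined via the standard
Pascal-type recurrence `[n+1, k] = q^k [n, k] + [n, k-1]`. -/
noncomputable def qb : ℕ → ℤ → LaurentPolynomial ℤ
  | 0, k => if k = 0 then 1 else 0
  | (n+1), k => T k * qb n k + qb n (k-1)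

/-- The variable `q`. -/
noncomputable def q : LaurentPolynomial ℤ := T 1

local notation "L" => LaurentPolynomial ℤ

lemma qb_succ (n : ℕ) (k : ℤ) : qb (n+1) k = T k * qb n k + qb n (k-1) := rfl

lemma T_mul_T (a b : ℤ) : (T a : L) * T b = T (a+b) := (T_add a b).symm

lemma qb_eq_zero : ∀ (n : ℕ) (k : ℤ), (k < 0 ∨ (n:ℤ) < k) → qb n k = 0 := by
  intro n
  induction n with
  | zero => intro k hk; simp only [qb]; rw [if_neg]; omega
  | succ n ih =>
      intro k hk
      rw [qb_succ, ih k (by push_cast at hk ⊢; omega), ih (k-1) (by push_cast at hk ⊢; omega)]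
      simp

lemma qb_succ' (n : ℕ) (k : ℤ) :
    qb (n+1) k = qb n k + T ((n:ℤ)+1-k) * qb n (k-1) := by
  induction n generalizing k with
  | zero =>
      rw [qb_succ]
      rcases eq_or_ne k 0 with rfl | h0
      · norm_num [qb, T_zero]
      rcases eq_or_ne k 1 with rfl | h1
      · norm_num [qb, T_zero]
      · simp only [qb, if_neg h0, if_neg (show k - 1 ≠ 0 by omega)]
        simp
  | succ n ih =>
      conv_lhs => rw [qb_succ (n+1) k, ih k, ih (k-1)]
      conv_rhs => rw [qb_succ n k, qb_succ n (k-1)]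
      push_cast
      have h1 : (T k : L) * T ((n:ℤ)+1-k) = T ((n:ℤ)+1+1-k) * T (k-1) := by
        rw [T_mul_T, T_mul_T]; ring_nf
      have h3 : ((n:ℤ)+1-(k-1)) = ((n:ℤ)+1+1-k) := by ring
      rw [h3]
      linear_combination (qb n (k-1)) * h1

lemma qb_symm : ∀ (n : ℕ) (k : ℤ), qb n ((n:ℤ) - k) = qb n k := by
  intro n
  induction n with
  | zero =>
      intro k; simp only [qb, Nat.cast_zero, zero_sub]
      split_ifs <;> first | rfl | omega
  | succ n ih =>
      intro k
      push_cast
      rw [qb_succ' n ((n:ℤ)+1-k), qb_succ n k]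
      have e2 : (n:ℤ) + 1 - ((n:ℤ)+1-k) = k := by ring
      have e3 : (n:ℤ) + 1 - k - 1 = (n:ℤ) - k := by ring
      rw [e2, e3, ih k]
      have e1 : (n:ℤ) + 1 - k = (n:ℤ) - (k - 1) := by ring
      rw [e1, ih (k-1)]
      ring

lemma q_pow (m : ℕ) : (q : L) ^ m = T (m : ℤ) := by
  rw [q, T_pow]; norm_num

noncomputable def eps (j : ℤ) : L := (-1) ^ j.natAbs

lemma eps_eq (j : ℤ) : eps j = if Even j then 1 else -1 := by
  unfold eps
  rcases Int.even_or_odd j with h | h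
  · rw [if_pos h, (Int.natAbs_even.mpr h).neg_one_pow]
  · rw [if_neg (Int.not_even_iff_odd.mpr h), (Int.natAbs_odd.mpr h).neg_one_pow]

lemma eps_neg_one_sub (j : ℤ) : eps (-1-j) = -eps j := by
  rw [eps_eq, eps_eq]
  rcases Int.even_or_odd j with h | h
  · rw [if_pos h, if_neg]
    simp [Int.even_sub, Int.even_add, parity_simps, h]
  · rw [if_neg (Int.not_even_iff_odd.mpr h), if_pos, neg_neg]
    obtain ⟨c, hc⟩ := h; exact ⟨-1-c, by omega⟩

lemma eps_one_sub (j : ℤ) : eps (1-j) = -eps j := by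
  rw [eps_eq, eps_eq]
  rcases Int.even_or_odd j with h | h
  · rw [if_pos h, if_neg]
    obtain ⟨c, hc⟩ := h
    rw [Int.not_even_iff_odd]; exact ⟨-c, by omega⟩
  · rw [if_neg (Int.not_even_iff_odd.mpr h), if_pos, neg_neg]
    obtain ⟨c, hc⟩ := h; exact ⟨-c, by omega⟩

lemma two_dvd_q1 (j : ℤ) : 2 ∣ j*(5*j+1) := by
  obtain ⟨r, hr⟩ := Int.even_mul_succ_self j
  exact ⟨2*j*j + r, by linear_combination hr⟩

lemma two_dvd_q2 (j : ℤ) : 2 ∣ j*(5*j-3) := by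
  obtain ⟨r, hr⟩ := Int.even_mul_succ_self j
  exact ⟨2*j*j - 2*j + r, by linear_combination hr⟩

noncomputable def t1 (n : ℕ) (j : ℤ) : L :=
  (-1) ^ j.natAbs * T (j*(5*j+1)/2) * qb (2*n) ((n:ℤ) - 2*j)

noncomputable def t2 (n : ℕ) (j : ℤ) : L :=
  (-1) ^ j.natAbs * T (j * (5 * j - 3) / 2) * qb (2 * n + 1) ((n : ℤ) + 1 - 2 * j)

noncomputable def r1 (n : ℕ) : L := ∑ j ∈ Finset.Icc (-(n:ℤ)-1) ((n:ℤ)+1), t1 n j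

noncomputable def r2 (n : ℕ) : L := ∑ j ∈ Finset.Icc (-(n:ℤ)-1) ((n:ℤ)+1), t2 n j

lemma t1_eq_zero {n : ℕ} {j : ℤ} (h : j < -(n:ℤ) ∨ (n:ℤ) < j) : t1 n j = 0 := by
  unfold t1
  rw [qb_eq_zero (2*n) ((n:ℤ) - 2*j) (by push_cast; omega), mul_zero]

lemma t2_eq_zero {n : ℕ} {j : ℤ} (h : j < -(n:ℤ) ∨ (n:ℤ) < j) : t2 n j = 0 := by
  unfold t2
  rw [qb_eq_zero (2*n+1) ((n:ℤ)+1 - 2*j) (by push_cast; omega), mul_zero]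

lemma sum_ext {f : ℤ → L} {a b a' b' : ℤ} (ha : a' ≤ a) (hb : b ≤ b')
    (hz : ∀ j, j ∉ Finset.Icc a b → f j = 0) :
    ∑ j ∈ Finset.Icc a' b', f j = ∑ j ∈ Finset.Icc a b, f j :=
  (Finset.sum_subset (Finset.Icc_subset_Icc ha hb) fun x _ hx => hz x hx).symm

lemma r1_eq (n : ℕ) {a b : ℤ} (ha : a ≤ -(n:ℤ)-1) (hb : (n:ℤ)+1 ≤ b) :
    r1 n = ∑ j ∈ Finset.Icc a b, t1 n j := by
  rw [r1]
  exact (sum_ext ha hb fun j hj => t1_eq_zero (by simp [Finset.mem_Icc] at hj; omega)).symm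

lemma r2_eq (n : ℕ) {a b : ℤ} (ha : a ≤ -(n:ℤ)-1) (hb : (n:ℤ)+1 ≤ b) :
    r2 n = ∑ j ∈ Finset.Icc a b, t2 n j := by
  rw [r2]
  exact (sum_ext ha hb fun j hj => t2_eq_zero (by simp [Finset.mem_Icc] at hj; omega)).symm

lemma half_eq {x y d : ℤ} (hx : 2 ∣ x) (hy : 2 ∣ y) (hxy : x = y + 2*d) : x/2 = y/2 + d := by
  obtain ⟨a, rfl⟩ := hx; obtain ⟨b, rfl⟩ := hy; omega

lemma r1_succ (n : ℕ) : r1 (n+1) = r1 n + T ((n:ℤ)+1) * r2 n := by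
  classical
  set d : ℤ → L := fun j =>
    (-1)^j.natAbs * T (j*(5*j+1)/2 + ((n:ℤ)+1+2*j)) * qb (2*n) ((n:ℤ)-1-2*j) with hd
  have key : ∀ j : ℤ, t1 (n+1) j = T ((n:ℤ)+1) * t2 n j + (t1 n j + d j) := by
    intro j
    unfold t1 t2
    rw [hd]
    push_cast
    rw [show 2*(n+1) = (2*n+1)+1 from by ring]
    rw [qb_succ (2*n+1) ((n:ℤ)+1-2*j)]
    rw [show ((n:ℤ)+1-2*j) - 1 = (n:ℤ)-2*j from by ring]
    rw [qb_succ' (2*n) ((n:ℤ)-2*j)]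
    rw [show ((2*n:ℕ):ℤ)+1-((n:ℤ)-2*j) = (n:ℤ)+1+2*j from by push_cast; ring]
    rw [show ((n:ℤ)-2*j) - 1 = (n:ℤ)-1-2*j from by ring]
    rw [T_add (j*(5*j+1)/2) ((n:ℤ)+1+2*j)]
    have hec : (T (j*(5*j+1)/2) : L) * T ((n:ℤ)+1-2*j)
        = T ((n:ℤ)+1) * T (j*(5*j-3)/2) := by
      rw [T_mul_T, T_mul_T]
      congr 1
      have h := half_eq (two_dvd_q1 j) (two_dvd_q2 j)
        (by ring : j*(5*j+1) = j*(5*j-3) + 2*(2*j))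
      linarith
    linear_combination ((-1 : L)^j.natAbs * qb (2*n+1) ((n:ℤ)+1-2*j)) * hec
  have h0 : r1 (n+1) = ∑ j ∈ Finset.Icc (-(n:ℤ)-3) ((n:ℤ)+2), t1 (n+1) j :=
    r1_eq (n+1) (by push_cast; omega) (by push_cast; omega)
  have hsum0 : ∑ j ∈ Finset.Icc (-(n:ℤ)-3) ((n:ℤ)+2), d j = 0 := by
    apply Finset.sum_involution (fun j _ => -1-j)
    · intro j _
      rw [hd]
      simp only
      have hs : ((-1 : L))^(-1-j).natAbs = -(-1)^j.natAbs := eps_neg_one_sub j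
      rw [hs]
      rw [show (n:ℤ)-1-2*(-1-j) = (n:ℤ)+1+2*j from by ring]
      have hq : qb (2*n) ((n:ℤ)+1+2*j) = qb (2*n) ((n:ℤ)-1-2*j) := by
        have h := qb_symm (2*n) ((n:ℤ)+1+2*j)
        rw [show ((2*n:ℕ):ℤ) - ((n:ℤ)+1+2*j) = (n:ℤ)-1-2*j from by push_cast; ring] at h
        exact h.symm
      rw [hq]
      rw [show (-1-j)*(5*(-1-j)+1)/2 + ((n:ℤ)+1+2*(-1-j))
          = j*(5*j+1)/2 + ((n:ℤ)+1+2*j) from by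
        have h := half_eq (two_dvd_q1 (-1-j)) (two_dvd_q1 j)
          (by ring : (-1-j)*(5*(-1-j)+1) = j*(5*j+1) + 2*(4*j+2))
        linarith]
      ring
    · intro j _ _; omega
    · intro j _; show -1 - (-1 - j) = j; omega
    · intro j hj; simp only [Finset.mem_Icc] at hj ⊢; omega
  rw [h0]
  calc ∑ j ∈ Finset.Icc (-(n:ℤ)-3) ((n:ℤ)+2), t1 (n+1) j
      = ∑ j ∈ Finset.Icc (-(n:ℤ)-3) ((n:ℤ)+2),
          (T ((n:ℤ)+1) * t2 n j + (t1 n j + d j)) :=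
        Finset.sum_congr rfl fun j _ => key j
    _ = T ((n:ℤ)+1) * (∑ j ∈ Finset.Icc (-(n:ℤ)-3) ((n:ℤ)+2), t2 n j)
        + ((∑ j ∈ Finset.Icc (-(n:ℤ)-3) ((n:ℤ)+2), t1 n j)
        + ∑ j ∈ Finset.Icc (-(n:ℤ)-3) ((n:ℤ)+2), d j) := by
        rw [Finset.sum_add_distrib, Finset.sum_add_distrib, Finset.mul_sum]
    _ = r1 n + T ((n:ℤ)+1) * r2 n := by
        rw [hsum0, ← r1_eq n (by omega) (by omega), ← r2_eq n (by omega) (by omega)]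
        ring

lemma r2_succ (n : ℕ) :
    r2 (n+1) = T ((n:ℤ)+1) * r1 (n+1) + r2 n - T ((n:ℤ)+1) * r2 n := by
  classical
  set E : ℤ → L := fun j =>
    (-1)^j.natAbs * T (j*(5*j-3)/2 + ((n:ℤ)+2-2*j)) * qb (2*n+1) ((n:ℤ)+2-2*j) with hE
  have key : ∀ j : ℤ, t2 (n+1) j = T ((n:ℤ)+1) * t1 (n+1) j + (t2 n j + E j) := by
    intro j
    unfold t1 t2
    rw [hE]
    push_cast
    rw [show (2*(n+1) : ℕ) = (2*n+1)+1 from by ring]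
    rw [show (n:ℤ)+1+1-2*j = (n:ℤ)+2-2*j from by ring]
    rw [qb_succ' ((2*n+1)+1) ((n:ℤ)+2-2*j)]
    rw [show ((2*n+1+1:ℕ):ℤ)+1-((n:ℤ)+2-2*j) = (n:ℤ)+1+2*j from by push_cast; ring]
    rw [show ((n:ℤ)+2-2*j) - 1 = (n:ℤ)+1-2*j from by ring]
    rw [qb_succ (2*n+1) ((n:ℤ)+2-2*j)]
    rw [show ((n:ℤ)+2-2*j) - 1 = (n:ℤ)+1-2*j from by ring]
    rw [T_add (j*(5*j-3)/2) ((n:ℤ)+2-2*j)]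
    have hfw : (T (j*(5*j-3)/2) : L) * T ((n:ℤ)+1+2*j)
        = T ((n:ℤ)+1) * T (j*(5*j+1)/2) := by
      rw [T_mul_T, T_mul_T]
      congr 1
      have h := half_eq (two_dvd_q2 j) (two_dvd_q1 j)
        (by ring : j*(5*j-3) = j*(5*j+1) + 2*(-2*j))
      linarith
    linear_combination ((-1 : L)^j.natAbs *
      ((qb ((2*n+1)+1) ((n:ℤ)+1-2*j)))) * hfw
  have hEpair : ∀ j : ℤ, E (1-j) = -(T ((n:ℤ)+1) * t2 n j) := by
    intro j
    rw [hE]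
    unfold t2
    simp only
    have hs : ((-1 : L))^(1-j).natAbs = -(-1)^j.natAbs := eps_one_sub j
    rw [hs]
    rw [show (n:ℤ)+2-2*(1-j) = (n:ℤ)+2*j from by ring]
    have hq : qb (2*n+1) ((n:ℤ)+2*j) = qb (2*n+1) ((n:ℤ)+1-2*j) := by
      have h := qb_symm (2*n+1) ((n:ℤ)+2*j)
      rw [show ((2*n+1:ℕ):ℤ) - ((n:ℤ)+2*j) = (n:ℤ)+1-2*j from by push_cast; ring] at h
      exact h.symm
    rw [hq]
    rw [show (1-j)*(5*(1-j)-3)/2 + ((n:ℤ)+2*j)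
        = ((n:ℤ)+1) + j*(5*j-3)/2 from by
      have h := half_eq (two_dvd_q2 (1-j)) (two_dvd_q2 j)
        (by ring : (1-j)*(5*(1-j)-3) = j*(5*j-3) + 2*(-2*j+1))
      linarith]
    rw [T_add ((n:ℤ)+1) (j*(5*j-3)/2)]
    ring
  have hsum0 : ∑ j ∈ Finset.Icc (-(n:ℤ)-2) ((n:ℤ)+3),
      (E j + T ((n:ℤ)+1) * t2 n j) = 0 := by
    apply Finset.sum_involution (fun j _ => 1-j)
    · intro j _
      have h1 := hEpair j
      have h2 := hEpair (1-j)
      rw [show (1:ℤ)-(1-j) = j from by ring] at h2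
      rw [h1, h2]
      ring
    · intro j _ _; omega
    · intro j _; show 1 - (1 - j) = j; omega
    · intro j hj; simp only [Finset.mem_Icc] at hj ⊢; omega
  have h0 : r2 (n+1) = ∑ j ∈ Finset.Icc (-(n:ℤ)-2) ((n:ℤ)+3), t2 (n+1) j :=
    r2_eq (n+1) (by push_cast; omega) (by push_cast; omega)
  have hr1 : ∑ j ∈ Finset.Icc (-(n:ℤ)-2) ((n:ℤ)+3), t1 (n+1) j = r1 (n+1) :=
    (r1_eq (n+1) (by push_cast; omega) (by push_cast; omega)).symm
  have hr2 : ∑ j ∈ Finset.Icc (-(n:ℤ)-2) ((n:ℤ)+3), t2 n j = r2 n :=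
    (r2_eq n (by omega) (by omega)).symm
  have hEsum : ∑ j ∈ Finset.Icc (-(n:ℤ)-2) ((n:ℤ)+3), E j
      = -(T ((n:ℤ)+1) * r2 n) := by
    have := hsum0
    rw [Finset.sum_add_distrib, ← Finset.mul_sum, hr2] at this
    linear_combination this
  rw [h0]
  calc ∑ j ∈ Finset.Icc (-(n:ℤ)-2) ((n:ℤ)+3), t2 (n+1) j
      = ∑ j ∈ Finset.Icc (-(n:ℤ)-2) ((n:ℤ)+3),
          (T ((n:ℤ)+1) * t1 (n+1) j + (t2 n j + E j)) :=
        Finset.sum_congr rfl fun j _ => key j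
    _ = T ((n:ℤ)+1) * (∑ j ∈ Finset.Icc (-(n:ℤ)-2) ((n:ℤ)+3), t1 (n+1) j)
        + ((∑ j ∈ Finset.Icc (-(n:ℤ)-2) ((n:ℤ)+3), t2 n j)
        + ∑ j ∈ Finset.Icc (-(n:ℤ)-2) ((n:ℤ)+3), E j) := by
        rw [Finset.sum_add_distrib, Finset.sum_add_distrib, Finset.mul_sum]
    _ = T ((n:ℤ)+1) * r1 (n+1) + r2 n - T ((n:ℤ)+1) * r2 n := by
        rw [hr1, hr2, hEsum]; ring

noncomputable def s1 (n : ℕ) : L := ∑ k ∈ Finset.range (n+1), q ^ (k^2) * qb n k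

noncomputable def s2 (n : ℕ) : L := ∑ k ∈ Finset.range (n+1), q ^ (k^2+k) * qb n k

noncomputable def W (n : ℕ) : L := ∑ k ∈ Finset.range (n+1), q ^ (k^2+2*k+1) * qb n k

lemma drop_top {g : ℕ → L} (n : ℕ) (f : ℕ → ℕ)
    (hg : ∀ k : ℕ, g k = q ^ (f k) * qb n k) :
    ∑ k ∈ Finset.range (n+2), g k = ∑ k ∈ Finset.range (n+1), g k := by
  rw [Finset.sum_range_succ, hg (n+1),
    qb_eq_zero n ((n+1 : ℕ) : ℤ) (by push_cast; omega), mul_zero, add_zero]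

lemma reidx (n : ℕ) :
    ∑ k ∈ Finset.range (n+2), q ^ (k^2) * qb n ((k:ℤ)-1) = W n := by
  rw [Finset.sum_range_succ']
  rw [show ((0:ℕ):ℤ) - 1 = -1 from by norm_num,
    qb_eq_zero n (-1) (by norm_num), mul_zero, add_zero]
  unfold W
  refine Finset.sum_congr rfl fun k _ => ?_
  rw [show ((k+1 : ℕ):ℤ) - 1 = (k:ℤ) from by push_cast; ring,
    show (k+1)^2 = k^2+2*k+1 from by ring]

lemma claim2 (n : ℕ) : s1 (n+1) = s2 n + W n := by
  unfold s1
  have hterm : ∀ k : ℕ, q ^ (k^2) * qb (n+1) (k:ℤ)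
      = q ^ (k^2+k) * qb n k + q ^ (k^2) * qb n ((k:ℤ)-1) := by
    intro k
    rw [qb_succ n (k:ℤ), ← q_pow k, pow_add]
    ring
  rw [show n+1+1 = n+2 from rfl]
  rw [Finset.sum_congr rfl fun k _ => hterm k, Finset.sum_add_distrib]
  rw [drop_top n (fun k => k^2+k) (fun k => rfl), reidx n]
  rfl

lemma claim1 (n : ℕ) : s2 (n+1) = s2 n + T ((n:ℤ)+1) * W n := by
  unfold s2
  have hterm : ∀ k : ℕ, q ^ (k^2+k) * qb (n+1) (k:ℤ)
      = q ^ (k^2+k) * qb n k + T ((n:ℤ)+1) * (q ^ (k^2) * qb n ((k:ℤ)-1)) := by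
    intro k
    rw [qb_succ' n (k:ℤ)]
    have hT : (q : L) ^ (k^2+k) * T ((n:ℤ)+1-(k:ℤ)) = T ((n:ℤ)+1) * q ^ (k^2) := by
      rw [q_pow, q_pow, T_mul_T, T_mul_T]
      congr 1
      push_cast
      ring
    linear_combination (qb n ((k:ℤ)-1)) * hT
  rw [show n+1+1 = n+2 from rfl]
  rw [Finset.sum_congr rfl fun k _ => hterm k, Finset.sum_add_distrib]
  rw [drop_top n (fun k => k^2+k) (fun k => rfl), ← Finset.mul_sum, reidx n]

lemma s2_succ (n : ℕ) :
    s2 (n+1) = T ((n:ℤ)+1) * s1 (n+1) + s2 n - T ((n:ℤ)+1) * s2 n := by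
  have h1 := claim1 n
  have h2 := claim2 n
  rw [h1]
  linear_combination (-(T ((n:ℤ)+1) : L)) * h2

lemma s1_succ (n : ℕ) : s1 (n+1) = s1 n + T ((n:ℤ)+1) * s2 n := by
  unfold s1
  have hterm : ∀ k : ℕ, q ^ (k^2) * qb (n+1) (k:ℤ)
      = q ^ (k^2) * qb n k + q ^ (k^2) * T ((n:ℤ)+1-(k:ℤ)) * qb n ((k:ℤ)-1) := by
    intro k
    rw [qb_succ' n (k:ℤ)]
    ring
  rw [show n+1+1 = n+2 from rfl]
  rw [Finset.sum_congr rfl fun k _ => hterm k, Finset.sum_add_distrib]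
  rw [drop_top n (fun k => k^2) (fun k => rfl)]
  congr 1
  rw [Finset.sum_range_succ']
  rw [show ((0:ℕ):ℤ) - 1 = -1 from by norm_num,
    qb_eq_zero n (-1) (by norm_num), mul_zero, add_zero]
  unfold s2
  rw [Finset.mul_sum]
  refine Finset.sum_congr rfl fun k _ => ?_
  rw [show ((k+1 : ℕ):ℤ) - 1 = (k:ℤ) from by push_cast; ring]
  have hT : (q : L) ^ ((k+1)^2) * T ((n:ℤ)+1-((k+1:ℕ):ℤ))
      = T ((n:ℤ)+1) * q ^ (k^2+k) := by
    rw [q_pow, q_pow, T_mul_T, T_mul_T]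
    congr 1
    push_cast
    ring
  linear_combination (qb n (k:ℤ)) * hT

lemma s1_zero : s1 0 = 1 := by
  unfold s1
  simp [qb]

lemma s2_zero : s2 0 = 1 := by
  unfold s2
  simp [qb]

lemma r1_zero : r1 0 = 1 := by
  have h : (Finset.Icc (-((0:ℕ):ℤ)-1) (((0:ℕ):ℤ)+1)) = ({-1, 0, 1} : Finset ℤ) := by decide
  rw [r1, h]
  rw [Finset.sum_insert (by decide), Finset.sum_insert (by decide), Finset.sum_singleton]
  unfold t1
  norm_num [qb]

lemma r2_zero : r2 0 = 1 := by
  have h : (Finset.Icc (-((0:ℕ):ℤ)-1) (((0:ℕ):ℤ)+1)) = ({-1, 0, 1} : Finset ℤ) := by decide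
  rw [r2, h]
  rw [Finset.sum_insert (by decide), Finset.sum_insert (by decide), Finset.sum_singleton]
  unfold t2
  norm_num [qb]

lemma both (n : ℕ) : s1 n = r1 n ∧ s2 n = r2 n := by
  induction n with
  | zero => exact ⟨s1_zero.trans r1_zero.symm, s2_zero.trans r2_zero.symm⟩
  | succ n ih =>
      have h1 : s1 (n+1) = r1 (n+1) := by
        rw [s1_succ, r1_succ, ih.1, ih.2]
      exact ⟨h1, by rw [s2_succ, r2_succ, h1, ih.2]⟩


theorem stmt9 (n : ℕ) :
    ∑ k ∈ Finset.range (n + 1), q ^ (k ^ 2 + k) * qb n k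
      = ∑ᶠ j : ℤ, (-1 : LaurentPolynomial ℤ) ^ j.natAbs * T (j * (5 * j - 3) / 2) *
          qb (2 * n + 1) ((n : ℤ) + 1 - 2 * j) := by
  have hL : (∑ k ∈ Finset.range (n + 1), q ^ (k ^ 2 + k) * qb n k) = s2 n := rfl
  have hR : (∑ᶠ j : ℤ, (-1 : LaurentPolynomial ℤ) ^ j.natAbs * T (j * (5 * j - 3) / 2) *
      qb (2 * n + 1) ((n : ℤ) + 1 - 2 * j)) = r2 n := by
    rw [r2]
    apply finsum_eq_sum_of_support_subset
    intro j hj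
    simp only [Function.mem_support] at hj
    simp only [Finset.coe_Icc, Set.mem_Icc]
    by_contra hc
    apply hj
    have hz : t2 n j = 0 := t2_eq_zero (by omega)
    unfold t2 at hz
    exact hz
  rw [hL, hR, (both n).2]
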